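/- arXiv:1312.6532 — 4 statements merged into one kernel-verified Lean document; each statement's English description precedes it below -/
import Mathlib

section
/- Weak secrecy of shared HMAC keys: for all terms a, b, k and logs L, if L is Good, KeyAB a b k L holds, and Level Low k L holds, then Logged (Bad a) L or Logged (Bad b) L. -/
abbrev byte := Nat

inductive term : Type
  | Literal (bs : List byte)
  | Pair (t1 t2 : term)
  | Hmac (k m : term)
  | SEnc (k p : term)

open term

inductive nonceUsage : Type

inductive hmacKeyUsage : Type
  | U_KeyAB (a b : term)

inductive sencKeyUsage : Type

inductive usage : Type
  | AttackerGuess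
  | Nonce (nu : nonceUsage)
  | HmacKey (hu : hmacKeyUsage)
  | SEncKey (su : sencKeyUsage)

inductive event : Type
  | New (t : term) (u : usage)
  | Request (a b req : term)
  | Response (a b req resp : term)
  | Bad (p : term)

abbrev log := Set event

def Logged (e : event) (L : log) : Prop := e ∈ L

def tagRequest : term := Literal [49]
def tagResponse : term := Literal [50]

def Requested (m req : term) : Prop := m = Pair tagRequest req
def Responded (m req resp : term) : Prop := m = Pair tagResponse (Pair req resp)

def KeyAB (a b k : term) (L : log) : Prop :=
  Logged (event.New k (usage.HmacKey (hmacKeyUsage.U_KeyAB a b))) L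

def KeyABPayload (a b m : term) (L : log) : Prop :=
  (∃ req, Requested m req ∧ Logged (event.Request a b req) L) ∨
  (∃ req resp, Responded m req resp ∧ Logged (event.Response a b req resp) L)

def canHmac (k m : term) (L : log) : Prop :=
  ∃ a b, KeyAB a b k L ∧ KeyABPayload a b m L

def KeyABComp (a b : term) (L : log) : Prop :=
  Logged (event.Bad a) L ∨ Logged (event.Bad b) L

def hmacComp (k : term) (L : log) : Prop :=
  ∃ a b, KeyAB a b k L ∧ KeyABComp a b L

def nonceComp (_t : term) (_L : log) : Prop := False
def sencComp (_t : term) (_L : log) : Prop := False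
def canSEnc (_k _p : term) (_L : log) : Prop := False

inductive level : Type | Low | High

inductive Level : level → term → log → Prop
  | Level_AttackerGuess {l : level} {bs : List byte} {L : log} :
      Logged (event.New (Literal bs) usage.AttackerGuess) L →
      Level l (Literal bs) L
  | Level_Nonce {l : level} {bs : List byte} {L : log} (nu : nonceUsage) :
      Logged (event.New (Literal bs) (usage.Nonce nu)) L →
      (l = level.Low → nonceComp (Literal bs) L) →
      Level l (Literal bs) L
  | Level_HMacKey {l : level} {bs : List byte} {L : log} (hu : hmacKeyUsage) :
      Logged (event.New (Literal bs) (usage.HmacKey hu)) L →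
      (l = level.Low → hmacComp (Literal bs) L) →
      Level l (Literal bs) L
  | Level_SEncKey {l : level} {bs : List byte} {L : log} (su : sencKeyUsage) :
      Logged (event.New (Literal bs) (usage.SEncKey su)) L →
      (l = level.Low → sencComp (Literal bs) L) →
      Level l (Literal bs) L
  | Level_Pair {l : level} {t1 t2 : term} {L : log} :
      Level l t1 L → Level l t2 L → Level l (Pair t1 t2) L
  | Level_Hmac {l : level} {k m : term} {L : log} :
      canHmac k m L → Level l m L → Level l (Hmac k m) L
  | Level_Hmac_Low {l : level} {k m : term} {L : log} :
      Level level.Low k L → Level level.Low m L → Level l (Hmac k m) L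
  | Level_SEnc {l l' : level} {k p : term} {L : log} :
      canSEnc k p L → Level l' p L → Level l (SEnc k p) L
  | Level_SEnc_Low {l : level} {k p : term} {L : log} :
      Level level.Low k L → Level level.Low p L → Level l (SEnc k p) L

def log_leq (L L' : log) : Prop := ∀ x, Logged x L → Logged x L'

def Good (L : log) : Prop :=
  (∀ t u, Logged (event.New t u) L → ∃ bs, t = Literal bs) ∧
  (∀ t u1 u2, Logged (event.New t u1) L → Logged (event.New t u2) L → u1 = u2)

/-- Goodness makes `Level` at a freshly logged HMAC key invert to `Level_HMacKey`: every `New` term is a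
literal and carries a single usage, which rules out the other literal constructors. -/
theorem Level.hmacComp_of_low {k : term} {hu : hmacKeyUsage} {L : log} (hG : Good L)
    (hk : Logged (event.New k (usage.HmacKey hu)) L) (hlow : Level level.Low k L) : hmacComp k L := by
  obtain ⟨bs, rfl⟩ := hG.1 k _ hk
  cases hlow with
  | Level_AttackerGuess h => cases hG.2 _ _ _ hk h
  | Level_Nonce _ h _ => cases hG.2 _ _ _ hk h
  | Level_SEncKey _ h _ => cases hG.2 _ _ _ hk h
  | Level_HMacKey _ _ hcomp => exact hcomp rfl

theorem KeyAB.unique {a b a' b' k : term} {L : log} (hG : Good L) (hK : KeyAB a b k L)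
    (hK' : KeyAB a' b' k L) : a = a' ∧ b = b' := by
  cases hG.2 _ _ _ hK hK'
  exact ⟨rfl, rfl⟩

theorem KeyAB.keyABComp_of_hmacComp {a b k : term} {L : log} (hG : Good L) (hK : KeyAB a b k L)
    (hcomp : hmacComp k L) : KeyABComp a b L := by
  obtain ⟨a', b', hK', hcomp'⟩ := hcomp
  obtain ⟨rfl, rfl⟩ := hK.unique hG hK'
  exact hcomp'

theorem WeakSecrecyKeyAB : ∀ (a b k : term) (L : log),
    Good L → KeyAB a b k L → Level level.Low k L →
    Logged (event.Bad a) L ∨ Logged (event.Bad b) L :=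
  fun _ _ _ _ hG hK hlow => hK.keyABComp_of_hmacComp hG (hlow.hmacComp_of_low hG hK)
end

section
/- HMAC inversion: for all hmac key usages hu, terms m and k, and logs L, if L is Good, Logged (New k (HmacKey hu)) L, and Level High (Hmac k m) L, then canHmac k m L or hmacComp k L. -/
open term

theorem Good.usage_unique {L : log} (hG : Good L) {t : term} {u1 u2 : usage}
    (h1 : Logged (event.New t u1) L) (h2 : Logged (event.New t u2) L) : u1 = u2 :=
  hG.2 t u1 u2 h1 h2

/-- In a good log a term has a single usage, so the only rule that can make a logged HMAC key
`Low` is `Level_HMacKey`, whose side condition is exactly compromise. -/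
theorem hmacComp_of_Level_Low {L : log} {k : term} {hu : hmacKeyUsage} (hG : Good L)
    (hk : Logged (event.New k (usage.HmacKey hu)) L) (hlow : Level level.Low k L) :
    hmacComp k L := by
  obtain ⟨bs, rfl⟩ := hG.1 k _ hk
  cases hlow with
  | Level_AttackerGuess h => cases hG.usage_unique hk h
  | Level_Nonce _ h _ => cases hG.usage_unique hk h
  | Level_HMacKey _ _ hcomp => exact hcomp rfl
  | Level_SEncKey _ h _ => cases hG.usage_unique hk h

theorem Hmac_Inversion : ∀ (hu : hmacKeyUsage) (m k : term) (L : log),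
    Good L → Logged (event.New k (usage.HmacKey hu)) L →
    Level level.High (term.Hmac k m) L →
    canHmac k m L ∨ hmacComp k L := by
  intro hu m k L hG hk hLevel
  cases hLevel with
  | Level_Hmac hcan _ => exact Or.inl hcan
  | Level_Hmac_Low hlow _ => exact Or.inr (hmacComp_of_Level_Low hG hk hlow)
end

section
/- Request authentication: for all terms a, b, req, k and logs L, if L is Good, KeyAB a b k L, and Level Low (Hmac k (Pair tagRequest req)) L, then Logged (Request a b req) L, or Logged (Bad a) L, or Logged (Bad b) L. -/
open term

theorem tagRequest_ne_tagResponse : tagRequest ≠ tagResponse := by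
  simp [tagRequest, tagResponse]

namespace Good

variable {L : log}

theorem usage_eq (hG : Good L) {t : term} {u₁ u₂ : usage}
    (h₁ : Logged (event.New t u₁) L) (h₂ : Logged (event.New t u₂) L) : u₁ = u₂ :=
  hG.2 t u₁ u₂ h₁ h₂

theorem keyAB_unique (hG : Good L) {a b a' b' k : term}
    (hK : KeyAB a b k L) (hK' : KeyAB a' b' k L) : a' = a ∧ b' = b := by
  have h := hG.usage_eq hK' hK
  simpa only [usage.HmacKey.injEq, hmacKeyUsage.U_KeyAB.injEq] using h

/-- In a good log the key is a literal with a single logged usage, so among the `Level` rules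
for literals only `Level_HMacKey` can apply. -/
theorem hmacComp_of_level_low (hG : Good L) {k : term} {hu : hmacKeyUsage}
    (hk : Logged (event.New k (usage.HmacKey hu)) L) (hLow : Level level.Low k L) :
    hmacComp k L := by
  obtain ⟨bs, rfl⟩ := hG.1 _ _ hk
  cases hLow with
  | Level_HMacKey _ _ hComp => exact hComp rfl
  | Level_AttackerGuess h => cases hG.usage_eq hk h
  | Level_Nonce _ h _ => cases hG.usage_eq hk h
  | Level_SEncKey _ h _ => cases hG.usage_eq hk h

theorem keyABComp_of_hmacComp (hG : Good L) {a b k : term}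
    (hK : KeyAB a b k L) (hComp : hmacComp k L) : KeyABComp a b L := by
  obtain ⟨a', b', hK', hComp'⟩ := hComp
  obtain ⟨rfl, rfl⟩ := hG.keyAB_unique hK hK'
  exact hComp'

theorem requestLogged_of_canHmac (hG : Good L) {a b k req : term}
    (hK : KeyAB a b k L) (hCan : canHmac k (Pair tagRequest req) L) :
    Logged (event.Request a b req) L := by
  obtain ⟨a', b', hK', hPayload⟩ := hCan
  obtain ⟨rfl, rfl⟩ := hG.keyAB_unique hK hK'
  rcases hPayload with ⟨req', hReq, hLogged⟩ | ⟨req', resp, hResp, -⟩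
  · obtain ⟨-, rfl⟩ := Pair.inj hReq
    exact hLogged
  · exact absurd (Pair.inj hResp).1 tagRequest_ne_tagResponse

end Good

theorem AuthenticationRequest : ∀ (a b req k : term) (L : log),
    Good L → KeyAB a b k L →
    Level level.Low (term.Hmac k (term.Pair tagRequest req)) L →
    Logged (event.Request a b req) L ∨
    Logged (event.Bad a) L ∨ Logged (event.Bad b) L := by
  intro a b req k L hG hK hLevel
  cases hLevel with
  | Level_Hmac hCan _ => exact Or.inl (hG.requestLogged_of_canHmac hK hCan)
  | Level_Hmac_Low hLowKey _ =>
    exact Or.inr (hG.keyABComp_of_hmacComp hK (hG.hmacComp_of_level_low hK hLowKey))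
end

section
/- HMAC at Low level with an honest key implies the payload is Low: for all terms k, m and logs L, if L is Good, there exists an hmac key usage hu with Logged (New k (HmacKey hu)) L, Level Low (Hmac k m) L, and NOT hmacComp k L, then Level Low m L and canHmac k m L. -/
open term

theorem hmacComp_of_level_low {k : term} {L : log} {hu : hmacKeyUsage} (hG : Good L)
    (hk : Logged (event.New k (usage.HmacKey hu)) L) (hlow : Level level.Low k L) :
    hmacComp k L := by
  obtain ⟨bs, rfl⟩ := hG.1 _ _ hk
  -- A Good log gives the key a single usage, so every rule but `Level_HMacKey` is excluded.
  cases hlow with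
  | Level_HMacKey _ _ hcomp => exact hcomp rfl
  | Level_AttackerGuess h => cases hG.2 _ _ _ h hk
  | Level_Nonce _ h _ => cases hG.2 _ _ _ h hk
  | Level_SEncKey _ h _ => cases hG.2 _ _ _ h hk

theorem Hmac_Low_Honest : ∀ (k m : term) (L : log),
    Good L → (∃ hu, Logged (event.New k (usage.HmacKey hu)) L) →
    Level level.Low (term.Hmac k m) L → ¬ hmacComp k L →
    Level level.Low m L ∧ canHmac k m L := by
  intro k m L hG ⟨hu, hk⟩ hLvl hComp
  cases hLvl with
  | Level_Hmac hcan hm => exact ⟨hm, hcan⟩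
  | Level_Hmac_Low hkLow _ => exact absurd (hmacComp_of_level_low hG hk hkLow) hComp
end
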